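/- arXiv:1403.0710 — 8 statements merged into one kernel-verified Lean document; each statement's English description precedes it below -/
import Mathlib

section
/- Let A and B be Heyting algebras and let f : A → B be a surjective map that preserves binary meets and Heyting implication, i.e. f(a ⊓ a') = f(a) ⊓ f(a') and f(a ⇨ a') = f(a) ⇨ f(a') for all a, a' ∈ A. Then f preserves the bottom element and binary joins: f(⊥) = ⊥ and f(a ⊔ a') = f(a) ⊔ f(a') for all a, a' ∈ A. -/
/-!
A meet-preserving map is monotone, so a surjective one sends `⊥` below the preimage of `⊥`.
For joins, pick `z` with `f z = f a ⊔ f a'`. Since `a ⊔ a' ⇨ z = (a ⇨ z) ⊓ (a' ⇨ z)`, preservation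
of `⊓` and `⇨` turns `f (a ⊔ a' ⇨ z)` into `(f a ⇨ f z) ⊓ (f a' ⇨ f z) = ⊤`, that is,
`f (a ⊔ a') ≤ f z`.
-/

theorem Monotone.map_bot_of_surjective {α β : Type*} [Preorder α] [OrderBot α] [PartialOrder β]
    [OrderBot β] {f : α → β} (hf : Monotone f) (hsurj : Function.Surjective f) : f ⊥ = ⊥ := by
  obtain ⟨z, hz⟩ := hsurj ⊥
  exact le_bot_iff.1 (hz ▸ hf bot_le)

section HeytingAlgebra

variable {A B : Type*} [HeytingAlgebra A] [HeytingAlgebra B] {f : A → B}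

theorem map_sup_le_of_map_inf_of_map_himp (hmeet : ∀ a a' : A, f (a ⊓ a') = f a ⊓ f a')
    (himp : ∀ a a' : A, f (a ⇨ a') = f a ⇨ f a') {a a' z : A} (ha : f a ≤ f z)
    (ha' : f a' ≤ f z) : f (a ⊔ a') ≤ f z := by
  have hsup : f (a ⊔ a' ⇨ z) = ⊤ := by
    rw [sup_himp_distrib, hmeet, himp, himp, himp_eq_top_iff.2 ha, himp_eq_top_iff.2 ha',
      inf_top_eq]
  rwa [himp, himp_eq_top_iff] at hsup

end HeytingAlgebra

/-- If `f : A → B` is a surjective map between Heyting algebras preserving binary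
meets and Heyting implication, then `f` preserves the bottom element and binary joins. -/
theorem surjective_meet_himp_hom_preserves_bot_and_sup
    {A B : Type*} [HeytingAlgebra A] [HeytingAlgebra B]
    (f : A → B) (hsurj : Function.Surjective f)
    (hmeet : ∀ a a' : A, f (a ⊓ a') = f a ⊓ f a')
    (himp : ∀ a a' : A, f (a ⇨ a') = f a ⇨ f a') :
    f ⊥ = ⊥ ∧ ∀ a a' : A, f (a ⊔ a') = f a ⊔ f a' := by
  have hmono : Monotone f := Monotone.of_map_inf hmeet
  refine ⟨hmono.map_bot_of_surjective hsurj, fun a a' => ?_⟩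
  obtain ⟨z, hz⟩ := hsurj (f a ⊔ f a')
  refine le_antisymm ?_ (sup_le (hmono le_sup_left) (hmono le_sup_right))
  rw [← hz]
  exact map_sup_le_of_map_inf_of_map_himp hmeet himp (hz ▸ le_sup_left) (hz ▸ le_sup_right)
end

section
/- Let H and K be Heyting algebras and let f : H → K and g : K → H form a Galois connection, i.e. f(a) ≤ b if and only if a ≤ g(b) for all a ∈ H and b ∈ K. Then f preserves binary meets (f(a ⊓ a') = f(a) ⊓ f(a') for all a, a' ∈ H) if and only if a ⇨ g(b) = g(f(a) ⇨ b) for all a ∈ H and b ∈ K. -/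
/-!
Both conditions are equalities tested by the Yoneda principle. Through the adjunction and
`x ≤ a ⇨ c ↔ x ⊓ a ≤ c`, the statement `x ≤ a ⇨ g b ↔ x ≤ g (f a ⇨ b)` becomes
`f (x ⊓ a) ≤ b ↔ f x ⊓ f a ≤ b`, so the Frobenius condition and meet preservation are the
same family of equivalences, read with `x` resp. `b` as the test variable.
-/

namespace GaloisConnection

variable {H K : Type*}

theorem le_himp_u_iff [GeneralizedHeytingAlgebra H] [Preorder K] {l : H → K} {u : K → H}
    (gc : GaloisConnection l u) {x a : H} {b : K} : x ≤ a ⇨ u b ↔ l (x ⊓ a) ≤ b := by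
  rw [le_himp_iff, gc]

theorem le_u_himp_iff [Preorder H] [GeneralizedHeytingAlgebra K] {l : H → K} {u : K → H}
    (gc : GaloisConnection l u) {x a : H} {b : K} : x ≤ u (l a ⇨ b) ↔ l x ⊓ l a ≤ b := by
  rw [← gc, le_himp_iff]

end GaloisConnection

/-- For a Galois connection `f ⊣ g` between Heyting algebras, `f` preserves binary
meets if and only if `a ⇨ g b = g (f a ⇨ b)` for all `a`, `b` (Frobenius condition). -/
theorem galoisConnection_meet_preserving_iff_frobenius
    {H K : Type*} [HeytingAlgebra H] [HeytingAlgebra K]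
    (f : H → K) (g : K → H) (gc : ∀ (a : H) (b : K), f a ≤ b ↔ a ≤ g b) :
    (∀ a a' : H, f (a ⊓ a') = f a ⊓ f a') ↔ (∀ (a : H) (b : K), a ⇨ g b = g (f a ⇨ b)) := by
  have hgc : GaloisConnection f g := gc
  calc (∀ x a : H, f (x ⊓ a) = f x ⊓ f a)
      ↔ ∀ x a : H, ∀ b : K, f (x ⊓ a) ≤ b ↔ f x ⊓ f a ≤ b :=
        forall₂_congr fun _ _ ↦ ⟨fun h _ ↦ h ▸ Iff.rfl, eq_of_forall_ge_iff⟩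
    _ ↔ ∀ (a : H) (b : K) (x : H), x ≤ a ⇨ g b ↔ x ≤ g (f a ⇨ b) := by
        simp only [hgc.le_himp_u_iff, hgc.le_u_himp_iff]
        exact ⟨fun h a b x ↦ h x a b, fun h x a b ↦ h a b x⟩
    _ ↔ ∀ (a : H) (b : K), a ⇨ g b = g (f a ⇨ b) :=
        forall₂_congr fun _ _ ↦ ⟨eq_of_forall_le_iff, fun h _ ↦ h ▸ Iff.rfl⟩
end

section
/- Let M be a partially ordered set and S ⊆ M a subset with the induced order. Let q send each up-set U of M to the up-set {y ∈ S | y ∈ U} of S, and let r send each up-set V of S to r(V) = {x ∈ M | for all y ∈ S with x ≤ y, y ∈ V}. Then: (i) r(V) is an up-set of M, and q and r form a Galois connection with q lower adjoint, i.e. q(U) ⊆ V if and only if U ⊆ r(V); (ii) q(r(V)) = V for every up-set V of S; (iii) r preserves binary intersections and Heyting implication: r(V ∩ W) = r(V) ∩ r(W) and r(V ⇨ W) = r(V) ⇨ r(W) for all up-sets V, W of S. -/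
/-- The restriction map on up-sets, sending an up-set `U` of `M` to its trace on `S`. -/
def upsetRestrict {M : Type*} [PartialOrder M] (S : Set M) (U : Set M) : Set S :=
  {y : S | (y : M) ∈ U}

/-- The upper adjoint of restriction: `r V = {x ∈ M | ∀ y ∈ S, x ≤ y → y ∈ V}`. -/
def upsetCorestrict {M : Type*} [PartialOrder M] (S : Set M) (V : Set S) : Set M :=
  {x : M | ∀ y : S, x ≤ (y : M) → y ∈ V}

/-- Heyting implication of up-sets of a poset:
`x ∈ U ⇨ V` iff for every `y ≥ x`, `y ∈ U` implies `y ∈ V`. -/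
def upsetHimp {X : Type*} [PartialOrder X] (U V : Set X) : Set X :=
  {x : X | ∀ y : X, x ≤ y → y ∈ U → y ∈ V}

/-! The key observation is that for an up-set `V` of `S`, a point of `S` lies in `r V` exactly
when it lies in `V`. This is (ii), and it lets the Heyting implication `r V ⇨ r W` be tested at
points of `S` only. -/

section UpsetRestriction

variable {M : Type*} [PartialOrder M] {S : Set M}

theorem isUpperSet_upsetCorestrict (V : Set S) : IsUpperSet (upsetCorestrict S V) :=
  fun _ _ hab ha y hby => ha y (hab.trans hby)

theorem upsetRestrict_subset_iff {U : Set M} (hU : IsUpperSet U) (V : Set S) :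
    upsetRestrict S U ⊆ V ↔ U ⊆ upsetCorestrict S V :=
  ⟨fun h _ hx y hxy => h (hU hxy hx : (y : M) ∈ U), fun h y hy => h hy y le_rfl⟩

theorem coe_mem_upsetCorestrict_iff {V : Set S} (hV : IsUpperSet V) {y : S} :
    (y : M) ∈ upsetCorestrict S V ↔ y ∈ V :=
  ⟨fun h => h y le_rfl, fun hy _ hyz => hV hyz hy⟩

theorem upsetRestrict_upsetCorestrict {V : Set S} (hV : IsUpperSet V) :
    upsetRestrict S (upsetCorestrict S V) = V :=
  Set.ext fun _ => coe_mem_upsetCorestrict_iff hV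

theorem upsetCorestrict_inter (V W : Set S) :
    upsetCorestrict S (V ∩ W) = upsetCorestrict S V ∩ upsetCorestrict S W := by
  ext x
  exact ⟨fun h => ⟨fun y hy => (h y hy).1, fun y hy => (h y hy).2⟩,
    fun h y hy => ⟨h.1 y hy, h.2 y hy⟩⟩

theorem upsetCorestrict_himp {V : Set S} (hV : IsUpperSet V) (W : Set S) :
    upsetCorestrict S (upsetHimp V W) =
      upsetHimp (upsetCorestrict S V) (upsetCorestrict S W) := by
  ext x
  constructor
  · intro h y hxy hyV z hyz
    exact h z (hxy.trans hyz) z le_rfl (hyV z hyz)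
  · intro h y hxy z hyz hzV
    exact h z (hxy.trans hyz) ((coe_mem_upsetCorestrict_iff hV).2 hzV) z le_rfl

end UpsetRestriction

/-- For a poset `M` and a subset `S ⊆ M` with the induced order:
(i) `r V` is an up-set and `q ⊣ r` is a Galois connection;
(ii) `q (r V) = V` for every up-set `V` of `S`;
(iii) `r` preserves binary intersections and Heyting implication of up-sets. -/
theorem upset_restriction_adjunction
    {M : Type*} [PartialOrder M] (S : Set M) :
    (∀ V : Set S, IsUpperSet V → IsUpperSet (upsetCorestrict S V)) ∧
    (∀ (U : Set M) (V : Set S), IsUpperSet U → IsUpperSet V →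
      (upsetRestrict S U ⊆ V ↔ U ⊆ upsetCorestrict S V)) ∧
    (∀ V : Set S, IsUpperSet V → upsetRestrict S (upsetCorestrict S V) = V) ∧
    (∀ V W : Set S, IsUpperSet V → IsUpperSet W →
      upsetCorestrict S (V ∩ W) = upsetCorestrict S V ∩ upsetCorestrict S W) ∧
    (∀ V W : Set S, IsUpperSet V → IsUpperSet W →
      upsetCorestrict S (upsetHimp V W) = upsetHimp (upsetCorestrict S V) (upsetCorestrict S W)) :=
  ⟨fun V _ => isUpperSet_upsetCorestrict V,
    fun _ V hU _ => upsetRestrict_subset_iff hU V,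
    fun _ hV => upsetRestrict_upsetCorestrict hV,
    fun V W _ _ => upsetCorestrict_inter V W,
    fun _ W hV _ => upsetCorestrict_himp hV W⟩
end

section
/- Let M be a partially ordered set in which the set {y ∈ M | x ≤ y} is finite for every x ∈ M. Then for every up-set A of M and every x ∉ A there exists a border point u of A with x ≤ u, i.e. a point u ≥ x with u ∉ A such that every z > u lies in A. -/
open Set

theorem exists_le_maximal_of_finite_Ici {M : Type*} [Preorder M]
    (hfin : ∀ x : M, (Ici x).Finite) {P : M → Prop} {x : M} (hx : P x) :
    ∃ u, x ≤ u ∧ Maximal P u := by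
  obtain ⟨u, hxu, hmax⟩ :=
    ((hfin x).inter_of_left {y | P y}).exists_le_maximal ⟨le_refl x, hx⟩
  refine ⟨u, hxu, hmax.prop.2, fun y hy huy => ?_⟩
  exact hmax.le_of_ge ⟨hxu.trans huy, hy⟩ huy

theorem imageFinite_hasBorders_general {M : Type*} [PartialOrder M]
    (hfin : ∀ x : M, {y : M | x ≤ y}.Finite)
    (A : Set M) (x : M) (hx : x ∉ A) :
    ∃ u : M, x ≤ u ∧ u ∉ A ∧ ∀ z : M, u < z → z ∈ A := by
  obtain ⟨u, hxu, hu⟩ := exists_le_maximal_of_finite_Ici hfin (P := (· ∉ A)) hx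
  exact ⟨u, hxu, hu.prop, fun z huz => not_not.mp (hu.not_prop_of_gt huz)⟩

/-- In a poset in which every point has only finitely many successors (an image-finite
frame), every up-set has borders: for every up-set `A` and every `x ∉ A` there is a
border point `u ≥ x` of `A`, i.e. `u ∉ A` and every `z > u` lies in `A`. -/
theorem imageFinite_hasBorders {M : Type*} [PartialOrder M]
    (hfin : ∀ x : M, {y : M | x ≤ y}.Finite)
    (A : Set M) (hA : IsUpperSet A) (x : M) (hx : x ∉ A) :
    ∃ u : M, x ≤ u ∧ u ∉ A ∧ ∀ z : M, u < z → z ∈ A :=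
  imageFinite_hasBorders_general hfin A x hx
end

section
/- Let M be a model on n variables and x ∈ M. Then x is separated if and only if there exists a (∧,→)-formula φ over the n variables such that x is a φ-border point. -/
/-!
Every `(∧,→)`-formula defines an upper set, so one can peel a `φ`-border point down to a
variable: a border point of `S ∩ T` is a border point of `S` or of `T`, and a border point `x`
of `φ → ψ` satisfies `φ` but not `ψ` (a witness above `x` refuting the implication would contradict
the border property), hence by persistence of `φ` it is a border point of `ψ`.
-/

/-- `(∧,→)`-formulas over `n` propositional variables. -/
inductive MeetImpForm (n : ℕ) : Type
  | var (i : Fin n) : MeetImpForm n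
  | and (φ ψ : MeetImpForm n) : MeetImpForm n
  | imp (φ ψ : MeetImpForm n) : MeetImpForm n

/-- Kripke satisfaction of a `(∧,→)`-formula in a model given by a poset `M` with
colouring `c : M → Fin n → Bool`. -/
def MeetImpSat {n : ℕ} {M : Type*} [PartialOrder M] (c : M → Fin n → Bool) :
    MeetImpForm n → M → Prop
  | .var i, x => c x i = true
  | .and φ ψ, x => MeetImpSat c φ x ∧ MeetImpSat c ψ x
  | .imp φ ψ, x => ∀ y : M, x ≤ y → MeetImpSat c φ y → MeetImpSat c ψ y

def IsBorderPoint {M : Type*} [LT M] (S : Set M) (x : M) : Prop :=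
  x ∉ S ∧ ∀ z, x < z → z ∈ S

namespace IsBorderPoint

variable {M : Type*}

theorem of_inter [LT M] {S T : Set M} {x : M} (h : IsBorderPoint (S ∩ T) x) :
    IsBorderPoint S x ∨ IsBorderPoint T x := by
  obtain ⟨hx, habove⟩ := h
  rcases not_and_or.mp hx with hS | hT
  · exact .inl ⟨hS, fun z hz => (habove z hz).1⟩
  · exact .inr ⟨hT, fun z hz => (habove z hz).2⟩

theorem of_imp [PartialOrder M] {S T : Set M} (hS : IsUpperSet S) {x : M}
    (h : IsBorderPoint {y | ∀ z, y ≤ z → z ∈ S → z ∈ T} x) : IsBorderPoint T x := by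
  obtain ⟨hx, habove⟩ := h
  simp only [Set.mem_ofPred_eq, not_forall] at hx
  obtain ⟨y, hxy, hyS, hyT⟩ := hx
  have hyx : y = x := by
    by_contra hne
    exact hyT (habove y (lt_of_le_of_ne hxy (Ne.symm hne)) y le_rfl hyS)
  subst hyx
  exact ⟨hyT, fun z hz => habove z hz z le_rfl (hS hz.le hyS)⟩

end IsBorderPoint

section

variable {n : ℕ} {M : Type*} [PartialOrder M] {c : M → Fin n → Bool}

theorem isUpperSet_setOf_meetImpSat (hc : Monotone c) :
    ∀ φ : MeetImpForm n, IsUpperSet {x | MeetImpSat c φ x}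
  | .var i => fun _ _ hxy hx => Bool.eq_true_of_true_le (hx ▸ hc hxy i)
  | .and φ ψ => (isUpperSet_setOf_meetImpSat hc φ).inter (isUpperSet_setOf_meetImpSat hc ψ)
  | .imp _ _ => fun _ _ hxy hx z hyz => hx z (hxy.trans hyz)

theorem exists_var_isBorderPoint_of_isBorderPoint (hc : Monotone c) :
    ∀ (φ : MeetImpForm n) {x : M}, IsBorderPoint {y | MeetImpSat c φ y} x →
      ∃ i, IsBorderPoint {y | c y i = true} x
  | .var i, _, h => ⟨i, h⟩
  | .and φ ψ, _, h =>
    (IsBorderPoint.of_inter (S := {y | MeetImpSat c φ y}) h).elim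
      (exists_var_isBorderPoint_of_isBorderPoint hc φ)
      (exists_var_isBorderPoint_of_isBorderPoint hc ψ)
  | .imp φ ψ, _, h =>
    exists_var_isBorderPoint_of_isBorderPoint hc ψ
      (IsBorderPoint.of_imp (isUpperSet_setOf_meetImpSat hc φ) h)

end

/-- A point of a model is separated (a `p_i`-border point for some variable `p_i`)
if and only if it is a `φ`-border point for some `(∧,→)`-formula `φ`. -/
theorem separated_iff_meetImp_border
    {n : ℕ} {M : Type*} [PartialOrder M] (c : M → Fin n → Bool) (hc : Monotone c)
    (x : M) :
    (∃ i : Fin n, c x i = false ∧ ∀ z : M, x < z → c z i = true) ↔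
    (∃ φ : MeetImpForm n, ¬ MeetImpSat c φ x ∧ ∀ z : M, x < z → MeetImpSat c φ z) := by
  simp only [← Bool.not_eq_true]
  constructor
  · rintro ⟨i, hborder⟩
    exact ⟨.var i, hborder⟩
  · rintro ⟨φ, hborder⟩
    exact exists_var_isBorderPoint_of_isBorderPoint hc φ hborder
end

section
/- Let M be a model on n variables. Then every chain in M consisting entirely of separated points has at most n elements. -/
/-- A point `x` of a model is separated if it is a `p_i`-border point for some
variable `p_i`, i.e. `p_i` is false at `x` but true at every proper successor. -/
def SeparatedPt {n : ℕ} {M : Type*} [PartialOrder M] (c : M → Fin n → Bool) (x : M) : Prop :=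
  ∃ i : Fin n, c x i = false ∧ ∀ z : M, x < z → c z i = true

/-! Choosing for each separated point a variable at which it is a border point, two comparable
points `x < y` get different variables: the variable of `x` is true at `y`, the one of `y` is
false there. So the choice is injective on a chain of separated points. -/

theorem IsChain.injective_of_lt_imp_ne {α β : Type*} [PartialOrder α] {s : Set α}
    (hs : IsChain (· ≤ ·) s) {f : s → β} (hf : ∀ x y : s, x < y → f x ≠ f y) :
    Function.Injective f := by
  intro x y hxy
  by_contra hne
  rcases hs x.2 y.2 (Subtype.coe_ne_coe.mpr hne) with hle | hle
  · exact hf x y (lt_of_le_of_ne hle hne) hxy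
  · exact hf y x (lt_of_le_of_ne hle (Ne.symm hne)) hxy.symm

theorem border_var_ne_of_lt {ι M : Type*} [Preorder M] {c : M → ι → Bool} {i j : ι} {x y : M}
    (hi : ∀ z, x < z → c z i = true) (hj : c y j = false) (hxy : x < y) : i ≠ j := by
  rintro rfl
  simp [hi y hxy] at hj

theorem chain_of_separated_card_le_general
    {n : ℕ} {M : Type*} [PartialOrder M] (c : M → Fin n → Bool)
    (C : Set M) (hchain : IsChain (· ≤ ·) C) (hsep : ∀ x ∈ C, SeparatedPt c x) :
    C.encard ≤ n := by
  choose v hv_false hv_true using hsep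
  have hinj : Function.Injective fun x : C => v x x.2 :=
    hchain.injective_of_lt_imp_ne fun x y hxy =>
      border_var_ne_of_lt (hv_true x x.2) (hv_false y y.2) hxy
  calc C.encard = ENat.card C := rfl
    _ ≤ ENat.card (Fin n) := ENat.card_le_card_of_injective hinj
    _ = n := by simp

/-- In a model on `n` variables, every chain consisting entirely of separated points
has at most `n` elements. -/
theorem chain_of_separated_card_le
    {n : ℕ} {M : Type*} [PartialOrder M] (c : M → Fin n → Bool) (hc : Monotone c)
    (C : Set M) (hchain : IsChain (· ≤ ·) C) (hsep : ∀ x ∈ C, SeparatedPt c x) :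
    C.encard ≤ n :=
  chain_of_separated_card_le_general c C hchain hsep
end

section
/- Let M be a model with borders on n variables, let φ be a (∧,→)-formula over the n variables, and let x ∈ M. Then M, x ⊨ φ if and only if for every separated point y with x ≤ y one has M^s, y ⊨ φ, where M^s, y ⊨ φ denotes satisfaction in the submodel of separated points. -/
/-!
Satisfaction of `(∧,→)`-formulas is upward closed, in `M` and in any submodel. The theorem holds
for every set of points that contains, above each point refuting a variable, another point
refuting it; with borders, the separated points form such a set. The proof is by induction on
the formula: only the variable case uses the refuting points above, and the implication case
moves between `M` and the submodel by upward closure.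
-/

namespace MeetImpSat

variable {n : ℕ} {M : Type*} [PartialOrder M] {c : M → Fin n → Bool}

theorem monotone (hc : Monotone c) (φ : MeetImpForm n) : Monotone (MeetImpSat c φ) := by
  induction φ with
  | var i => exact fun x y hxy (hx : c x i = true) => top_le_iff.mp (hx.symm.trans_le (hc hxy i))
  | and φ ψ ihφ ihψ => exact fun x y hxy hx => ⟨ihφ hxy hx.1, ihψ hxy hx.2⟩
  | imp φ ψ _ _ => exact fun x y hxy hx z hyz => hx z (hxy.trans hyz)

theorem iff_forall_subtype_le (hc : Monotone c) {p : M → Prop}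
    (hp : ∀ (x : M) (i : Fin n), c x i = false → ∃ u, p u ∧ x ≤ u ∧ c u i = false)
    (φ : MeetImpForm n) (x : M) :
    MeetImpSat c φ x ↔
      ∀ y : {z : M // p z}, x ≤ (y : M) → MeetImpSat (fun z : {z : M // p z} => c z) φ y := by
  have hc_sub : Monotone fun z : {z : M // p z} => c z := hc.comp (Subtype.mono_coe p)
  induction φ generalizing x with
  | var i =>
    refine ⟨fun hx y hxy => monotone hc (.var i) hxy hx, fun h => ?_⟩
    by_contra hx
    obtain ⟨u, hu, hxu, hui⟩ := hp x i (Bool.of_not_eq_true hx)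
    exact absurd (h ⟨u, hu⟩ hxu) (by simp [MeetImpSat, hui])
  | and φ ψ ihφ ihψ =>
    simp only [MeetImpSat, ihφ, ihψ, imp_and, forall_and]
  | imp φ ψ ihφ ihψ =>
    constructor
    · intro hx y hxy z hyz hzφ
      have hzφ' : MeetImpSat c φ z := (ihφ z).mpr fun w hzw => monotone hc_sub φ hzw hzφ
      exact (ihψ z).mp (hx z (hxy.trans hyz) hzφ') z le_rfl
    · intro h z hxz hzφ
      exact (ihψ z).mpr fun w hzw => h w (hxz.trans hzw) w le_rfl ((ihφ z).mp hzφ w hzw)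

end MeetImpSat

/-- In a model with borders `M`, a point `x` satisfies a `(∧,→)`-formula `φ` if and
only if every separated point above `x` satisfies `φ` in the submodel `M^s` of
separated points (with the restricted order and colouring). -/
theorem meetImpSat_iff_all_separated_above
    {n : ℕ} {M : Type*} [PartialOrder M] (c : M → Fin n → Bool) (hc : Monotone c)
    (hborders : ∀ (x : M) (i : Fin n), c x i = false →
      ∃ u : M, x ≤ u ∧ c u i = false ∧ ∀ z : M, u < z → c z i = true)
    (φ : MeetImpForm n) (x : M) :
    MeetImpSat c φ x ↔
      ∀ y : {z : M // SeparatedPt c z}, x ≤ (y : M) →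
        MeetImpSat (fun z : {z : M // SeparatedPt c z} => c (z : M)) φ y := by
  refine MeetImpSat.iff_forall_subtype_le hc (fun y i hyi => ?_) φ x
  obtain ⟨u, hyu, hui, hu_border⟩ := hborders y i hyi
  exact ⟨u, ⟨i, hui, hu_border⟩, hyu, hui⟩
end

section
/- Let M be a model with borders on n variables, let w ∈ M be a separated point, and let φ be a (∧,→)-formula over the n variables. Then M, w ⊨ φ if and only if M^s, w ⊨ φ, where M^s, w ⊨ φ denotes satisfaction in the submodel of separated points. -/
def HasBorders {n : ℕ} {M : Type*} [PartialOrder M] (c : M → Fin n → Bool) : Prop :=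
  ∀ (x : M) (i : Fin n), c x i = false →
    ∃ u : M, x ≤ u ∧ c u i = false ∧ ∀ z : M, u < z → c z i = true

section

variable {n : ℕ} {M : Type*} [PartialOrder M] {c : M → Fin n → Bool}

theorem MeetImpSat.mono (hc : Monotone c) {φ : MeetImpForm n} {x y : M} (hxy : x ≤ y)
    (h : MeetImpSat c φ x) : MeetImpSat c φ y := by
  induction φ with
  | var i => exact Bool.le_iff_imp.mp (hc hxy i) h
  | and φ ψ ihφ ihψ => exact ⟨ihφ h.1, ihψ h.2⟩
  | imp φ ψ _ _ => exact fun z hyz => h z (hxy.trans hyz)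

theorem HasBorders.exists_separatedPt_not_meetImpSat (hb : HasBorders c) (hc : Monotone c)
    (φ : MeetImpForm n) {y : M} (h : ¬ MeetImpSat c φ y) :
    ∃ u, y ≤ u ∧ SeparatedPt c u ∧ ¬ MeetImpSat c φ u := by
  induction φ generalizing y with
  | var i =>
    obtain ⟨u, hyu, hu, hborder⟩ := hb y i (Bool.not_eq_true _ ▸ h)
    exact ⟨u, hyu, ⟨i, hu, hborder⟩, by simp [MeetImpSat, hu]⟩
  | and φ ψ ihφ ihψ =>
    by_cases hφ : MeetImpSat c φ y
    · obtain ⟨u, hyu, hu, hψ⟩ := ihψ fun hψ => h ⟨hφ, hψ⟩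
      exact ⟨u, hyu, hu, fun h' => hψ h'.2⟩
    · obtain ⟨u, hyu, hu, hφ⟩ := ihφ hφ
      exact ⟨u, hyu, hu, fun h' => hφ h'.1⟩
  | imp φ ψ _ ihψ =>
    obtain ⟨z, hyz, hzφ, hzψ⟩ : ∃ z, y ≤ z ∧ MeetImpSat c φ z ∧ ¬ MeetImpSat c ψ z := by
      simpa [MeetImpSat] using h
    obtain ⟨u, hzu, hu, huψ⟩ := ihψ hzψ
    exact ⟨u, hyz.trans hzu, hu, fun h' => huψ (h' u le_rfl (hzφ.mono hc hzu))⟩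

end

/-- In a model with borders `M`, a separated point `w` satisfies a `(∧,→)`-formula
`φ` in `M` if and only if it satisfies `φ` in the submodel `M^s` of separated points
(with the restricted order and colouring). -/
theorem meetImpSat_iff_meetImpSat_sep
    {n : ℕ} {M : Type*} [PartialOrder M] (c : M → Fin n → Bool) (hc : Monotone c)
    (hborders : ∀ (x : M) (i : Fin n), c x i = false →
      ∃ u : M, x ≤ u ∧ c u i = false ∧ ∀ z : M, u < z → c z i = true)
    (w : M) (hw : SeparatedPt c w) (φ : MeetImpForm n) :
    MeetImpSat c φ w ↔
      MeetImpSat (fun z : {z : M // SeparatedPt c z} => c (z : M)) φ ⟨w, hw⟩ := by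
  have hb : HasBorders c := hborders
  induction φ generalizing w with
  | var i => rfl
  | and φ ψ ihφ ihψ => exact and_congr (ihφ w hw) (ihψ w hw)
  | imp φ ψ ihφ ihψ =>
    constructor
    · rintro h ⟨y, hy⟩ hwy hyφ
      exact (ihψ y hy).mp (h y hwy ((ihφ y hy).mpr hyφ))
    · intro h y hwy hyφ
      by_contra hyψ
      obtain ⟨u, hyu, hu, huψ⟩ := hb.exists_separatedPt_not_meetImpSat hc ψ hyψ
      have huφ : MeetImpSat c φ u := hyφ.mono hc hyu
      exact huψ ((ihψ u hu).mpr (h ⟨u, hu⟩ (hwy.trans hyu) ((ihφ u hu).mp huφ)))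
end
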